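/- arXiv:1402.0064 — 3 statements merged into one kernel-verified Lean document; each statement's English description precedes it below -/
import Mathlib

section
/- Let λ > 0, n a positive integer, and α ∈ (n−1, n). Let u : ℝ → ℂ be n-times continuously differentiable with u^{(j)} ∈ L¹(ℝ) for 0 ≤ j ≤ n and u^{(j)}(x) → 0 as |x| → ∞ for 0 ≤ j < n. Set G(x) = (1/Γ(n−α)) ∫_{−∞}^{x} (x−ξ)^{n−α−1} e^{λξ} u(ξ) dξ, assume G is n-times differentiable and that the left tempered fractional derivative (D_−^{α,λ}u)(x) = e^{−λx} G^{(n)}(x) belongs to L¹(ℝ). Then for every ω ∈ ℝ, F(D_−^{α,λ}u)(ω) = (λ + iω)^{α} û(ω). -/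
/-!
With `β = n - α`, the fractional integral is `G = e^{λx} (k ⋆ u)` for the kernel
`k(t) = t^{β-1} e^{-λt} / Γ(β)` on `t > 0`. By the Leibniz rule, `e^{-λx} G^{(n)}` is
`(d/dx + λ)^n (k ⋆ u)`, whose Fourier transform is `(λ + iω)^n k̂ û`. The transform
`k̂(ω) = (λ + iω)^{-β}` is a Laplace transform of `t^{β-1}`: for real rates it is a Gamma
integral, and both sides are holomorphic in the rate on the right half-plane, so they agree there.
The derivatives of `k ⋆ u` of order `< n` fall on `u`, which is legitimate because those derivatives
of `u` are bounded (they vanish at infinity); the one of order `n` is integrable because `D` is.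
-/

open MeasureTheory Filter

/-- Fourier transform with convention `û(ω) = ∫ e^{-iωx} u(x) dx`. -/
noncomputable def fourierT (u : ℝ → ℂ) (ω : ℝ) : ℂ :=
  ∫ x : ℝ, Complex.exp (-(Complex.I * ω * x)) * u x

/-- The fractional integral `G(x) = (1/Γ(n-α)) ∫_{-∞}^x (x-ξ)^{n-α-1} e^{λξ} u(ξ) dξ`. -/
noncomputable def leftFracG (lam : ℝ) (n : ℕ) (α : ℝ) (u : ℝ → ℂ) (x : ℝ) : ℂ :=
  (1 / Real.Gamma ((n : ℝ) - α) : ℝ) •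
    ∫ ξ in Set.Iio x, ((x - ξ) ^ ((n : ℝ) - α - 1) * Real.exp (lam * ξ) : ℝ) • u ξ

/-- Left Riemann–Liouville tempered fractional derivative
`(D_-^{α,λ}u)(x) = e^{-λx} G^{(n)}(x)`. -/
noncomputable def leftTD (lam : ℝ) (n : ℕ) (α : ℝ) (u : ℝ → ℂ) (x : ℝ) : ℂ :=
  (Real.exp (-(lam * x)) : ℝ) • iteratedDeriv n (leftFracG lam n α u) x

open Complex Set Convolution ContinuousLinearMap FourierTransform Topology

theorem fourierT_eq_fourier (f : ℝ → ℂ) (ω : ℝ) :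
    fourierT f ω = 𝓕 f (ω / (2 * Real.pi)) := by
  rw [Real.fourier_real_eq_integral_exp_smul, fourierT]
  congr 1 with x
  rw [smul_eq_mul]
  congr 2
  push_cast
  field_simp

theorem integrable_fourierT_integrand {f : ℝ → ℂ} (hf : Integrable f) (ω : ℝ) :
    Integrable (fun x : ℝ => cexp (-(I * ω * x)) * f x) :=
  hf.bdd_mul (c := 1) (by fun_prop) (ae_of_all _ fun x => by simp [norm_exp])

theorem fourierT_finset_sum {ι : Type*} (s : Finset ι) (c : ι → ℂ) {f : ι → ℝ → ℂ}
    (hf : ∀ i ∈ s, Integrable (f i)) (ω : ℝ) :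
    fourierT (fun x => ∑ i ∈ s, c i * f i x) ω = ∑ i ∈ s, c i * fourierT (f i) ω := by
  simp only [fourierT, Finset.mul_sum, ← integral_const_mul, mul_left_comm _ (c _)]
  exact integral_finsetSum s fun i hi => (integrable_fourierT_integrand (hf i hi) ω).const_mul _

theorem fourierT_iteratedDeriv {f : ℝ → ℂ} {N : ℕ} (hf : ContDiff ℝ N f)
    (h'f : ∀ j ≤ N, Integrable (iteratedDeriv j f)) {j : ℕ} (hj : j ≤ N) (ω : ℝ) :
    fourierT (iteratedDeriv j f) ω = (I * ω) ^ j * fourierT f ω := by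
  have hπ : (Real.pi : ℂ) ≠ 0 := by exact_mod_cast Real.pi_ne_zero
  rw [fourierT_eq_fourier, fourierT_eq_fourier,
    Real.fourier_iteratedDeriv (N := N) (by exact_mod_cast hf) (by exact_mod_cast h'f)
      (by exact_mod_cast hj)]
  simp only [smul_eq_mul]
  push_cast
  field_simp

theorem fourierT_convolution {k g : ℝ → ℂ} (hk : Integrable k) (hg : Integrable g) (ω : ℝ) :
    fourierT (k ⋆[mul ℂ ℂ] g) ω = fourierT k ω * fourierT g ω := by
  simp only [fourierT_eq_fourier, Real.fourier_mul_convolution_eq hk hg]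

theorem exists_norm_le_of_tendsto_cocompact {X E : Type*} [TopologicalSpace X]
    [NormedAddCommGroup E] {f : X → E} (hf : Continuous f)
    (h0 : Tendsto f (cocompact X) (𝓝 0)) : ∃ C, ∀ x, ‖f x‖ ≤ C := by
  obtain ⟨C, hC⟩ := isBounded_iff_forall_norm_le.1
    (ZeroAtInftyContinuousMap.isBounded_range ⟨⟨f, hf⟩, h0⟩)
  exact ⟨C, fun x => hC _ ⟨x, rfl⟩⟩

theorem hasDerivAt_convolution_of_bounded {k g g' : ℝ → ℂ} (hk : Integrable k)
    (hg : ∀ y, HasDerivAt g (g' y) y) {C C' : ℝ} (hgC : ∀ y, ‖g y‖ ≤ C)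
    (hg'c : Continuous g') (hg'C : ∀ y, ‖g' y‖ ≤ C') (x : ℝ) :
    HasDerivAt (k ⋆[mul ℂ ℂ] g) ((k ⋆[mul ℂ ℂ] g') x) x := by
  have hgc : Continuous g := continuous_iff_continuousAt.2 fun y => (hg y).continuousAt
  have hmeas : ∀ {h : ℝ → ℂ}, Continuous h → ∀ y,
      AEStronglyMeasurable (fun s => k s * h (y - s)) :=
    fun hh y => hk.aestronglyMeasurable.mul (by fun_prop : Continuous _).aestronglyMeasurable
  simp only [convolution_def, mul_apply']
  refine (hasDerivAt_integral_of_dominated_loc_of_deriv_le univ_mem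
    (F := fun y s => k s * g (y - s)) (F' := fun y s => k s * g' (y - s))
    (Eventually.of_forall (hmeas hgc)) ?_ (hmeas hg'c x) (ae_of_all _ fun s y _ => ?_)
    (hk.norm.mul_const C') (ae_of_all _ fun s y _ => ?_)).2
  · simpa only [mul_comm (k _)] using
      hk.bdd_mul (by fun_prop : Continuous fun s => g (x - s)).aestronglyMeasurable
        (ae_of_all _ fun s => hgC (x - s))
  · rw [norm_mul]
    exact mul_le_mul_of_nonneg_left (hg'C _) (norm_nonneg _)
  · exact ((hg (y - s)).comp_sub_const y s).const_mul (k s)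

theorem iteratedDeriv_convolution_of_bounded {k g : ℝ → ℂ} {m : ℕ} (hk : Integrable k)
    (hg : ContDiff ℝ m g) (hbdd : ∀ j < m, ∃ C, ∀ y, ‖iteratedDeriv j g y‖ ≤ C) :
    ∀ j < m, iteratedDeriv j (k ⋆[mul ℂ ℂ] g) = k ⋆[mul ℂ ℂ] iteratedDeriv j g
  | 0, _ => by simp
  | j + 1, hj => by
    obtain ⟨C, hC⟩ := hbdd j (by omega)
    obtain ⟨C', hC'⟩ := hbdd (j + 1) hj
    have hderiv : ∀ y, HasDerivAt (iteratedDeriv j g) (iteratedDeriv (j + 1) g y) y := by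
      intro y
      rw [iteratedDeriv_succ]
      exact (hg.differentiable_iteratedDeriv j (by exact_mod_cast (by omega : j < m)) y).hasDerivAt
    rw [iteratedDeriv_succ, iteratedDeriv_convolution_of_bounded hk hg hbdd j (by omega)]
    exact funext fun x => (hasDerivAt_convolution_of_bounded hk hderiv hC
      (hg.continuous_iteratedDeriv _ (by exact_mod_cast hj.le)) hC' x).deriv

theorem iteratedDeriv_cexp_const_mul_ofReal (c : ℂ) (j : ℕ) :
    iteratedDeriv j (fun x : ℝ => cexp (c * x)) = fun x : ℝ => c ^ j * cexp (c * x) := by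
  induction j with
  | zero => simp
  | succ j ih =>
    ext x
    rw [iteratedDeriv_succ, ih]
    have := (((hasDerivAt_id x).ofReal_comp.const_mul c).cexp).const_mul (c ^ j)
    simp only [id, ofReal_one, mul_one] at this
    rw [this.deriv, pow_succ]
    ring

theorem iteratedDeriv_cexp_mul {f : ℝ → ℂ} {n : ℕ} (hf : ContDiff ℝ n f) (c : ℂ) (x : ℝ) :
    iteratedDeriv n (fun y : ℝ => cexp (c * y) * f y) x =
      cexp (c * x) *
        ∑ i ∈ Finset.range (n + 1), n.choose i * c ^ (n - i) * iteratedDeriv i f x := by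
  simp_rw [mul_comm (cexp _)]
  rw [iteratedDeriv_fun_mul hf.contDiffAt
    (g := fun y : ℝ => cexp (c * y))
    (contDiff_const.mul ofRealCLM.contDiff).cexp.contDiffAt, Finset.sum_mul]
  simp only [iteratedDeriv_cexp_const_mul_ofReal]
  exact Finset.sum_congr rfl fun i _ => by ring

theorem integrableOn_rpow_mul_exp_neg_mul {s b : ℝ} (hs : -1 < s) (hb : 0 < b) :
    IntegrableOn (fun t : ℝ => t ^ s * Real.exp (-(b * t))) (Ioi 0) := by
  simpa [Real.rpow_one] using integrableOn_rpow_mul_exp_neg_mul_rpow hs one_pos hb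

theorem norm_rpow_mul_cexp_neg_mul {t : ℝ} (ht : 0 ≤ t) (s : ℝ) (z : ℂ) :
    ‖((t ^ s : ℝ) : ℂ) * cexp (-(z * t))‖ = t ^ s * Real.exp (-(z.re * t)) := by
  rw [norm_mul, norm_real, Real.norm_of_nonneg (Real.rpow_nonneg ht _), norm_exp]
  simp

theorem aestronglyMeasurable_rpow_mul_cexp_neg_mul (s : ℝ) (z : ℂ) :
    AEStronglyMeasurable (fun t : ℝ => ((t ^ s : ℝ) : ℂ) * cexp (-(z * t)))
      (volume.restrict (Ioi 0)) :=
  ((continuous_ofReal.comp_continuousOn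
    (continuousOn_id.rpow_const fun _ ht => Or.inl (ne_of_gt ht))).mul
    (by fun_prop)).aestronglyMeasurable measurableSet_Ioi

theorem integrableOn_rpow_mul_cexp_neg_mul {s : ℝ} (hs : -1 < s) {z : ℂ} (hz : 0 < z.re) :
    IntegrableOn (fun t : ℝ => ((t ^ s : ℝ) : ℂ) * cexp (-(z * t))) (Ioi 0) := by
  refine (integrableOn_rpow_mul_exp_neg_mul hs hz).congr'
    (aestronglyMeasurable_rpow_mul_cexp_neg_mul s z) ?_
  filter_upwards [ae_restrict_mem measurableSet_Ioi] with t (ht : 0 < t)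
  rw [norm_rpow_mul_cexp_neg_mul ht.le, Real.norm_of_nonneg (by positivity)]

theorem differentiableAt_integral_rpow_mul_cexp_neg_mul {s : ℝ} (hs : -1 < s) {w : ℂ}
    (hw : 0 < w.re) :
    DifferentiableAt ℂ (fun z : ℂ => ∫ t in Ioi 0, ((t ^ s : ℝ) : ℂ) * cexp (-(z * t))) w := by
  have hhalf : {z : ℂ | w.re / 2 < z.re} ∈ 𝓝 w :=
    (isOpen_lt continuous_const continuous_re).mem_nhds (show w.re / 2 < w.re by linarith)
  refine (hasDerivAt_integral_of_dominated_loc_of_deriv_le hhalf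
    (F' := fun z t => -(((t ^ (s + 1) : ℝ) : ℂ) * cexp (-(z * t))))
    (bound := fun t => t ^ (s + 1) * Real.exp (-(w.re / 2 * t)))
    (Eventually.of_forall (aestronglyMeasurable_rpow_mul_cexp_neg_mul s))
    (integrableOn_rpow_mul_cexp_neg_mul hs hw)
    (aestronglyMeasurable_rpow_mul_cexp_neg_mul (s + 1) w).neg ?_
    (integrableOn_rpow_mul_exp_neg_mul (by linarith) (by linarith)) ?_).2.differentiableAt
  · filter_upwards [ae_restrict_mem measurableSet_Ioi] with t (ht : 0 < t) z (hz : _ < _)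
    rw [norm_neg, norm_rpow_mul_cexp_neg_mul ht.le]
    gcongr
  · filter_upwards [ae_restrict_mem measurableSet_Ioi] with t (ht : 0 < t) z _
    refine ((((hasDerivAt_id z).mul_const (t : ℂ)).neg.cexp).const_mul
      ((t ^ s : ℝ) : ℂ)).congr_deriv ?_
    rw [Real.rpow_add_one ht.ne']
    simp only [Pi.neg_apply, id, ofReal_mul]
    ring

theorem integral_rpow_mul_cexp_neg_mul_Ioi {β : ℝ} (hβ : 0 < β) {z : ℂ} (hz : 0 < z.re) :
    ∫ t in Ioi 0, ((t ^ (β - 1) : ℝ) : ℂ) * cexp (-(z * t)) = Real.Gamma β * z ^ (-(β : ℂ)) := by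
  set U : Set ℂ := {w | 0 < w.re}
  have hU : IsOpen U := isOpen_lt continuous_const continuous_re
  have hΦ : AnalyticOnNhd ℂ (fun w : ℂ => ∫ t in Ioi 0, ((t ^ (β - 1) : ℝ) : ℂ) * cexp (-(w * t)))
      U :=
    DifferentiableOn.analyticOnNhd (fun w hw => (differentiableAt_integral_rpow_mul_cexp_neg_mul
      (by linarith) hw).differentiableWithinAt) hU
  have hΨ : AnalyticOnNhd ℂ (fun w : ℂ => Real.Gamma β * w ^ (-(β : ℂ))) U :=
    DifferentiableOn.analyticOnNhd (fun w hw =>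
      (((hasDerivAt_id w).cpow_const (Or.inl hw)).differentiableAt.const_mul
        _).differentiableWithinAt) hU
  have hreal : ∀ r : ℝ, 0 < r → ∫ t in Ioi 0, ((t ^ (β - 1) : ℝ) : ℂ) * cexp (-(r * t)) =
      Real.Gamma β * (r : ℂ) ^ (-(β : ℂ)) := by
    intro r hr
    have hpt : ∀ t : ℝ, ((t ^ (β - 1) : ℝ) : ℂ) * cexp (-(r * t)) =
        ((t ^ (β - 1) * Real.exp (-(r * t)) : ℝ) : ℂ) := fun t => by push_cast; rfl
    simp only [hpt]
    rw [integral_complex_ofReal, Real.integral_rpow_mul_exp_neg_mul_Ioi hβ hr, ← ofReal_neg,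
      ← ofReal_cpow hr.le, Real.rpow_neg hr.le, ← Real.inv_rpow hr.le, one_div]
    push_cast
    ring
  have hfreq : ∃ᶠ w in 𝓝[≠] (1 : ℂ), (∫ t in Ioi 0, ((t ^ (β - 1) : ℝ) : ℂ) * cexp (-(w * t))) =
      Real.Gamma β * w ^ (-(β : ℂ)) := by
    have hmap : Tendsto ((↑) : ℝ → ℂ) (𝓝[≠] 1) (𝓝[≠] 1) :=
      continuous_ofReal.continuousWithinAt.tendsto_nhdsWithin fun r hr => by
        simpa using hr
    exact hmap.frequently (eventually_nhdsWithin_of_eventually_nhds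
      ((lt_mem_nhds one_pos).mono hreal)).frequently
  exact hΦ.eqOn_of_preconnected_of_frequently_eq hΨ (convex_halfSpace_re_gt 0).isPreconnected
    (by simp [U]) hfreq hz

noncomputable def temperedKernel (lam β : ℝ) : ℝ → ℂ :=
  indicator (Ioi 0) fun t => ((t ^ (β - 1) * Real.exp (-(lam * t)) / Real.Gamma β : ℝ) : ℂ)

theorem integrable_temperedKernel {lam β : ℝ} (hlam : 0 < lam) (hβ : 0 < β) :
    Integrable (temperedKernel lam β) := by
  rw [temperedKernel, integrable_indicator_iff measurableSet_Ioi]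
  exact ((integrableOn_rpow_mul_exp_neg_mul (by linarith) hlam).div_const _).ofReal

theorem fourierT_temperedKernel {lam β : ℝ} (hlam : 0 < lam) (hβ : 0 < β) (ω : ℝ) :
    fourierT (temperedKernel lam β) ω = (lam + I * ω) ^ (-(β : ℂ)) := by
  have hΓ : (Real.Gamma β : ℂ) ≠ 0 := ofReal_ne_zero.2 (Real.Gamma_pos_of_pos hβ).ne'
  have hpt : ∀ t : ℝ, cexp (-(I * ω * t)) * temperedKernel lam β t = indicator (Ioi 0)
      (fun t : ℝ => (Real.Gamma β : ℂ)⁻¹ *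
        (((t ^ (β - 1) : ℝ) : ℂ) * cexp (-((lam + I * ω) * t)))) t := by
    intro t
    by_cases ht : t ∈ Ioi 0
    · simp only [temperedKernel, indicator_of_mem ht, neg_add, add_mul, exp_add]
      push_cast
      ring
    · simp [temperedKernel, indicator_of_notMem ht]
  simp only [fourierT, hpt]
  rw [integral_indicator measurableSet_Ioi, integral_const_mul,
    integral_rpow_mul_cexp_neg_mul_Ioi hβ (by simpa using hlam)]
  field_simp

theorem leftFracG_eq_cexp_mul_convolution (lam : ℝ) (n : ℕ) (α : ℝ) (u : ℝ → ℂ) (x : ℝ) :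
    leftFracG lam n α u x =
      cexp (lam * x) * (temperedKernel lam (n - α) ⋆[mul ℂ ℂ] u) x := by
  set F : ℝ → ℂ := fun ξ => ((x - ξ) ^ ((n : ℝ) - α - 1) * Real.exp (lam * ξ) : ℝ) • u ξ
  have hpt : ∀ s : ℝ, (1 / Real.Gamma (n - α) : ℝ) • indicator (Iio x) F (x - s) =
      cexp (lam * x) * (temperedKernel lam (n - α) s * u (x - s)) := by
    intro s
    by_cases hs : 0 < s
    · simp only [F, temperedKernel, indicator_of_mem (show x - s ∈ Iio x by simpa),
        indicator_of_mem (show s ∈ Ioi 0 from hs), sub_sub_cancel]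
      rw [show lam * (x - s) = lam * x + -(lam * s) by ring, Real.exp_add, real_smul, real_smul]
      push_cast
      ring
    · simp [F, temperedKernel, indicator_of_notMem (show x - s ∉ Iio x by simpa using hs),
        indicator_of_notMem (show s ∉ Ioi 0 from hs)]
  rw [leftFracG, ← integral_indicator measurableSet_Iio,
    ← integral_sub_left_eq_self _ volume x, ← integral_smul, convolution_def,
    ← integral_const_mul]
  simp only [mul_apply']
  exact integral_congr_ae (ae_of_all _ hpt)

section TemperedDerivative

variable {lam : ℝ} {n : ℕ} {α : ℝ} {u : ℝ → ℂ}

theorem contDiff_temperedKernel_convolution (hG : ContDiff ℝ n (leftFracG lam n α u)) :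
    ContDiff ℝ n (temperedKernel lam (n - α) ⋆[mul ℂ ℂ] u) := by
  have hH : temperedKernel lam (n - α) ⋆[mul ℂ ℂ] u =
      fun x : ℝ => cexp (-(lam * x)) * leftFracG lam n α u x := by
    ext x
    rw [leftFracG_eq_cexp_mul_convolution, ← mul_assoc, ← exp_add, neg_add_cancel, exp_zero,
      one_mul]
  rw [hH]
  exact (contDiff_const.mul ofRealCLM.contDiff).neg.cexp.mul hG

theorem leftTD_eq_sum_iteratedDeriv (hG : ContDiff ℝ n (leftFracG lam n α u)) (x : ℝ) :
    leftTD lam n α u x = ∑ i ∈ Finset.range (n + 1), (n.choose i * (lam : ℂ) ^ (n - i)) *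
      iteratedDeriv i (temperedKernel lam (n - α) ⋆[mul ℂ ℂ] u) x := by
  have hG' : leftFracG lam n α u =
      fun y : ℝ => cexp (lam * y) * (temperedKernel lam (n - α) ⋆[mul ℂ ℂ] u) y :=
    funext (leftFracG_eq_cexp_mul_convolution lam n α u)
  rw [leftTD, hG', iteratedDeriv_cexp_mul (contDiff_temperedKernel_convolution hG), real_smul,
    ofReal_exp, ← mul_assoc, ← exp_add]
  push_cast
  simp

theorem integrable_iteratedDeriv_temperedKernel_convolution (hlam : 0 < lam) (hα : α < n)
    (hu : ContDiff ℝ n u) (huL1 : ∀ j ≤ n, Integrable (iteratedDeriv j u))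
    (huz : ∀ j < n, Tendsto (iteratedDeriv j u) (cocompact ℝ) (𝓝 0))
    (hG : ContDiff ℝ n (leftFracG lam n α u)) (hD : Integrable (leftTD lam n α u)) :
    ∀ j ≤ n, Integrable (iteratedDeriv j (temperedKernel lam (n - α) ⋆[mul ℂ ℂ] u)) := by
  have hk := integrable_temperedKernel hlam (sub_pos.2 hα)
  have hlt : ∀ j < n, Integrable (iteratedDeriv j (temperedKernel lam (n - α) ⋆[mul ℂ ℂ] u)) :=
    fun j hj => by
      rw [iteratedDeriv_convolution_of_bounded hk hu (fun i hi =>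
        exists_norm_le_of_tendsto_cocompact
          (hu.continuous_iteratedDeriv i (by exact_mod_cast hi.le)) (huz i hi)) j hj]
      exact hk.integrable_convolution _ (huL1 j hj.le)
  intro j hj
  rcases hj.lt_or_eq with hj | rfl
  · exact hlt j hj
  have hDn : iteratedDeriv j (temperedKernel lam (j - α) ⋆[mul ℂ ℂ] u) = fun x =>
      leftTD lam j α u x - ∑ i ∈ Finset.range j, (j.choose i * (lam : ℂ) ^ (j - i)) *
        iteratedDeriv i (temperedKernel lam (j - α) ⋆[mul ℂ ℂ] u) x := by
    ext x
    simp [leftTD_eq_sum_iteratedDeriv hG, Finset.sum_range_succ]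
  rw [hDn]
  exact hD.sub (integrable_finsetSum _ fun i hi => (hlt i (Finset.mem_range.1 hi)).const_mul _)

end TemperedDerivative

theorem cpow_natCast_mul_cpow_neg_sub {z : ℂ} (hz : z ≠ 0) (n : ℕ) (α : ℝ) :
    z ^ n * z ^ (-(((n : ℝ) - α : ℝ) : ℂ)) = z ^ (α : ℂ) := by
  rw [← cpow_natCast, ← cpow_add _ _ hz]
  push_cast
  ring_nf

theorem fourier_leftTemperedDerivative_general (lam : ℝ) (hlam : 0 < lam) (n : ℕ)
    (α : ℝ) (hα₂ : α < n) (u : ℝ → ℂ)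
    (hu : ContDiff ℝ n u)
    (huL1 : ∀ j : ℕ, j ≤ n → Integrable (iteratedDeriv j u))
    (huz : ∀ j : ℕ, j < n → Tendsto (iteratedDeriv j u) (cocompact ℝ) (nhds 0))
    (hG : ContDiff ℝ n (leftFracG lam n α u))
    (hD : Integrable (leftTD lam n α u)) :
    ∀ ω : ℝ, fourierT (leftTD lam n α u) ω =
      ((lam : ℂ) + Complex.I * ω) ^ (α : ℂ) * fourierT u ω := by
  intro ω
  have hβ : 0 < (n : ℝ) - α := by linarith
  set k := temperedKernel lam (n - α)
  set H := k ⋆[mul ℂ ℂ] u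
  have hk : Integrable k := integrable_temperedKernel hlam hβ
  have hH : ContDiff ℝ n H := contDiff_temperedKernel_convolution hG
  have hHint := integrable_iteratedDeriv_temperedKernel_convolution hlam hα₂ hu huL1 huz hG hD
  have hz : (lam : ℂ) + I * ω ≠ 0 := fun h => by simpa [hlam.ne'] using congrArg re h
  calc fourierT (leftTD lam n α u) ω
      = ∑ i ∈ Finset.range (n + 1), (n.choose i * (lam : ℂ) ^ (n - i)) *
          fourierT (iteratedDeriv i H) ω := by
        rw [funext (leftTD_eq_sum_iteratedDeriv hG)]
        exact fourierT_finset_sum _ _ (fun i hi => hHint i (Finset.mem_range_succ_iff.1 hi)) ω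
    _ = (lam + I * ω) ^ n * fourierT H ω := by
        rw [add_comm (lam : ℂ), add_pow, Finset.sum_mul]
        refine Finset.sum_congr rfl fun i hi => ?_
        rw [fourierT_iteratedDeriv hH hHint (Finset.mem_range_succ_iff.1 hi)]
        ring
    _ = (lam + I * ω) ^ (α : ℂ) * fourierT u ω := by
        rw [fourierT_convolution hk (by simpa using huL1 0 n.zero_le),
          fourierT_temperedKernel hlam hβ, ← mul_assoc, cpow_natCast_mul_cpow_neg_sub hz]

theorem fourier_leftTemperedDerivative (lam : ℝ) (hlam : 0 < lam) (n : ℕ) (hn : 0 < n)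
    (α : ℝ) (hα₁ : (n : ℝ) - 1 < α) (hα₂ : α < n) (u : ℝ → ℂ)
    (hu : ContDiff ℝ n u)
    (huL1 : ∀ j : ℕ, j ≤ n → Integrable (iteratedDeriv j u))
    (huz : ∀ j : ℕ, j < n → Tendsto (iteratedDeriv j u) (cocompact ℝ) (nhds 0))
    (hG : ContDiff ℝ n (leftFracG lam n α u))
    (hD : Integrable (leftTD lam n α u)) :
    ∀ ω : ℝ, fourierT (leftTD lam n α u) ω =
      ((lam : ℂ) + Complex.I * ω) ^ (α : ℂ) * fourierT u ω :=
  fourier_leftTemperedDerivative_general lam hlam n α hα₂ u hu huL1 huz hG hD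
end

section
/- Let 1 < α < 2, h > 0, λ ≥ 0, and suppose (γ₁, γ₂, γ₃) lies in regime S1: γ₂ = (2+α)/2 − 2γ₁, γ₃ = γ₁ − α/2, and max{ 2(α²+3α−4)/(α²+3α+2), (α²+3α)/(α²+3α+4) } ≤ γ₁ ≤ 3(α²+3α−2)/(2(α²+3α+2)). Then the tempered-WSGD weights satisfy g_1^{(α)} ≤ 0, g_0^{(α)} + g_2^{(α)} ≥ 0, and g_k^{(α)} ≥ 0 for every k ≥ 3. -/
/-- Normalized Grünwald weights `w_k^{(α)} = (-1)^k (α choose k)`. -/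
noncomputable def wgt (α : ℝ) (k : ℕ) : ℝ :=
  (-1 : ℝ) ^ k * (∏ i ∈ Finset.range k, (α - i)) / (Nat.factorial k)

/-- Tempered-WSGD weights: `g_0 = γ₁ e^{hλ}`, `g_1 = γ₁ w_1 + γ₂ w_0`,
`g_k = (γ₁ w_k + γ₂ w_{k-1} + γ₃ w_{k-2}) e^{-(k-1)hλ}` for `k ≥ 2`. -/
noncomputable def gwt (α γ₁ γ₂ γ₃ h lam : ℝ) : ℕ → ℝ
  | 0 => γ₁ * Real.exp (h * lam)
  | 1 => γ₁ * wgt α 1 + γ₂ * wgt α 0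
  | (k + 2) => (γ₁ * wgt α (k + 2) + γ₂ * wgt α (k + 1) + γ₃ * wgt α k) *
      Real.exp (-(((k : ℝ) + 1) * h * lam))

/-- Regime S1 for the weights `(γ₁, γ₂, γ₃)`. -/
def RegimeS1 (α γ₁ γ₂ γ₃ : ℝ) : Prop :=
  γ₂ = (2 + α) / 2 - 2 * γ₁ ∧ γ₃ = γ₁ - α / 2 ∧
    max (2 * (α ^ 2 + 3 * α - 4) / (α ^ 2 + 3 * α + 2))
        ((α ^ 2 + 3 * α) / (α ^ 2 + 3 * α + 4)) ≤ γ₁ ∧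
    γ₁ ≤ 3 * (α ^ 2 + 3 * α - 2) / (2 * (α ^ 2 + 3 * α + 2))

/-- Regime S2 for the weights `(γ₁, γ₂, γ₃)`. -/
def RegimeS2 (α γ₁ γ₂ γ₃ : ℝ) : Prop :=
  γ₁ = (2 + α) / 4 - γ₂ / 2 ∧ γ₃ = (2 - α) / 4 - γ₂ / 2 ∧
    ((α - 4) * (α ^ 2 + 3 * α + 2) + 24) / (2 * (α ^ 2 + 3 * α + 2)) ≤ γ₂ ∧
    γ₂ ≤ min (((α - 2) * (α ^ 2 + 3 * α + 4) + 16) / (2 * (α ^ 2 + 3 * α + 4)))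
            (((α - 6) * (α ^ 2 + 3 * α + 2) + 48) / (2 * (α ^ 2 + 3 * α + 2)))

/-- Regime S3 for the weights `(γ₁, γ₂, γ₃)`. -/
def RegimeS3 (α γ₁ γ₂ γ₃ : ℝ) : Prop :=
  γ₁ = α / 2 + γ₃ ∧ γ₂ = (2 - α) / 2 - 2 * γ₃ ∧
    max ((2 - α) * (α ^ 2 + α - 8) / (α ^ 2 + 3 * α + 2))
        ((1 - α) * (α ^ 2 + 2 * α) / (2 * (α ^ 2 + 3 * α + 4))) ≤ γ₃ ∧
    γ₃ ≤ (2 - α) * (α ^ 2 + 2 * α - 3) / (2 * (α ^ 2 + 3 * α + 2))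

/-- The signed product `(-1)^m * ∏_{i<m+2} (α - i)` is nonnegative for `1 < α < 2`. -/
lemma signed_prod_nonneg (α : ℝ) (hα₁ : 1 < α) (hα₂ : α < 2) (m : ℕ) :
    0 ≤ (-1 : ℝ) ^ m * ∏ i ∈ Finset.range (m + 2), (α - i) := by
  induction m with
  | zero =>
    simp [Finset.prod_range_succ]
    nlinarith
  | succ n ih =>
    have hstep : ∏ i ∈ Finset.range (n + 3), (α - i)
        = (∏ i ∈ Finset.range (n + 2), (α - i)) * (α - (n + 2 : ℕ)) := by
      rw [Finset.prod_range_succ]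
    have hle : (α - ((n + 2 : ℕ) : ℝ)) ≤ 0 := by
      push_cast
      have : (0 : ℝ) ≤ (n : ℝ) := Nat.cast_nonneg n
      linarith
    have key : (-1 : ℝ) ^ (n + 1) * ∏ i ∈ Finset.range (n + 3), (α - i)
        = ((-1 : ℝ) ^ n * ∏ i ∈ Finset.range (n + 2), (α - i)) * (((n + 2 : ℕ) : ℝ) - α) := by
      rw [hstep, pow_succ]; ring
    rw [show n + 1 + 2 = n + 3 from rfl, key]
    exact mul_nonneg ih (by linarith)

lemma wgt_shift (α : ℝ) (m : ℕ) :
    wgt α (m + 2) = ((-1 : ℝ) ^ m * ∏ i ∈ Finset.range (m + 2), (α - i)) /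
      (Nat.factorial (m + 2)) := by
  unfold wgt
  have : (-1 : ℝ) ^ (m + 2) = (-1 : ℝ) ^ m := by
    rw [pow_add]; ring
  rw [this]

set_option maxHeartbeats 1000000 in
theorem gwt_sign_regimeS1 (α γ₁ γ₂ γ₃ h lam : ℝ)
    (hα₁ : 1 < α) (hα₂ : α < 2) (hh : 0 < h) (hlam : 0 ≤ lam)
    (hreg : RegimeS1 α γ₁ γ₂ γ₃) :
    gwt α γ₁ γ₂ γ₃ h lam 1 ≤ 0 ∧
    0 ≤ gwt α γ₁ γ₂ γ₃ h lam 0 + gwt α γ₁ γ₂ γ₃ h lam 2 ∧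
    ∀ k : ℕ, 3 ≤ k → 0 ≤ gwt α γ₁ γ₂ γ₃ h lam k := by
  obtain ⟨h2, h3, hmax, hub⟩ := hreg
  subst h2; subst h3
  have hden2 : (0 : ℝ) < α ^ 2 + 3 * α + 2 := by nlinarith
  have hden4 : (0 : ℝ) < α ^ 2 + 3 * α + 4 := by nlinarith
  have hA : 2 * (α ^ 2 + 3 * α - 4) / (α ^ 2 + 3 * α + 2) ≤ γ₁ :=
    le_trans (le_max_left _ _) hmax
  have hB : (α ^ 2 + 3 * α) / (α ^ 2 + 3 * α + 4) ≤ γ₁ :=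
    le_trans (le_max_right _ _) hmax
  have hA' : 2 * (α ^ 2 + 3 * α - 4) ≤ γ₁ * (α ^ 2 + 3 * α + 2) := by
    rw [div_le_iff₀ hden2] at hA; linarith
  have hB' : α ^ 2 + 3 * α ≤ γ₁ * (α ^ 2 + 3 * α + 4) := by
    rw [div_le_iff₀ hden4] at hB; linarith
  have hub' : γ₁ * (2 * (α ^ 2 + 3 * α + 2)) ≤ 3 * (α ^ 2 + 3 * α - 2) := by
    rw [le_div_iff₀ (by nlinarith : (0 : ℝ) < 2 * (α ^ 2 + 3 * α + 2))] at hub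
    linarith
  have hγhalf : (1 : ℝ) / 2 ≤ γ₁ := by nlinarith [hB', sq_nonneg (α - 1)]
  have hγ0 : (0 : ℝ) ≤ γ₁ := by linarith
  have w0 : wgt α 0 = 1 := by simp [wgt]
  have w1 : wgt α 1 = -α := by
    simp [wgt, Finset.prod_range_one]
  have w2 : wgt α 2 = α * (α - 1) / 2 := by
    unfold wgt
    rw [Finset.prod_range_succ, Finset.prod_range_one]
    norm_num
  have w3 : wgt α 3 = α * (α - 1) * (2 - α) / 6 := by
    unfold wgt
    rw [Finset.prod_range_succ, Finset.prod_range_succ, Finset.prod_range_one]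
    norm_num [Nat.factorial]
    ring
  refine ⟨?_, ?_, ?_⟩
  · -- g₁ ≤ 0
    simp only [gwt, w0, w1]
    nlinarith
  · -- 0 ≤ g₀ + g₂
    simp only [gwt]
    norm_num
    rw [w0, w1, w2]
    have hEE : Real.exp (-(h * lam)) ≤ Real.exp (h * lam) := by
      apply Real.exp_le_exp.2
      nlinarith [mul_nonneg hh.le hlam]
    have hE' : (0 : ℝ) < Real.exp (-(h * lam)) := Real.exp_pos _
    have hC : (0 : ℝ) ≤ γ₁ + (γ₁ * (α * (α - 1) / 2) + ((2 + α) / 2 - 2 * γ₁) * (-α) +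
        (γ₁ - α / 2) * 1) := by nlinarith [hB']
    nlinarith [mul_nonneg hγ0 (sub_nonneg.2 hEE), mul_nonneg hC hE'.le]
  · -- 0 ≤ g_k for k ≥ 3
    intro k hk
    obtain ⟨j, rfl⟩ := Nat.exists_eq_add_of_le hk
    match j with
    | 0 =>
      simp only [Nat.add_zero]
      simp only [gwt]
      apply mul_nonneg _ (Real.exp_pos _).le
      norm_num
      rw [w1, w2, w3]
      nlinarith [mul_nonneg (show (0 : ℝ) ≤ 3 * (α ^ 2 + 3 * α - 2) -
        γ₁ * (2 * (α ^ 2 + 3 * α + 2)) by linarith) (show (0 : ℝ) ≤ α by linarith)]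
    | (m + 1) =>
      rw [show 3 + (m + 1) = (m + 2) + 2 by omega]
      simp only [gwt]
      apply mul_nonneg _ (Real.exp_pos _).le
      set Q : ℝ := (-1 : ℝ) ^ m * ∏ i ∈ Finset.range (m + 2), (α - i) with hQdef
      have hQ : 0 ≤ Q := signed_prod_nonneg α hα₁ hα₂ m
      have e2 : wgt α (m + 2) = Q / (Nat.factorial (m + 2)) := wgt_shift α m
      have e3 : wgt α (m + 3) = Q * (((m : ℝ) + 2) - α) / (Nat.factorial (m + 3)) := by
        rw [show m + 3 = (m + 1) + 2 from rfl, wgt_shift α (m + 1)]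
        congr 1
        rw [show m + 1 + 2 = m + 3 from rfl, Finset.prod_range_succ, pow_succ, hQdef]
        push_cast
        ring
      have e4 : wgt α (m + 4) = Q * (((m : ℝ) + 2) - α) * (((m : ℝ) + 3) - α) /
          (Nat.factorial (m + 4)) := by
        rw [show m + 4 = (m + 2) + 2 from rfl, wgt_shift α (m + 2)]
        congr 1
        rw [show m + 2 + 2 = m + 4 from rfl, Finset.prod_range_succ, Finset.prod_range_succ,
          pow_add, hQdef]
        push_cast
        ring
      have hf2 : (0 : ℝ) < (Nat.factorial (m + 2) : ℝ) := by
        exact_mod_cast Nat.factorial_pos (m + 2)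
      have f3 : ((Nat.factorial (m + 3) : ℝ)) = ((m : ℝ) + 3) * (Nat.factorial (m + 2)) := by
        rw [show m + 3 = (m + 2) + 1 from rfl, Nat.factorial_succ]
        push_cast; ring
      have f4 : ((Nat.factorial (m + 4) : ℝ)) = ((m : ℝ) + 4) * (((m : ℝ) + 3) *
          (Nat.factorial (m + 2))) := by
        rw [show m + 4 = (m + 3) + 1 from rfl, Nat.factorial_succ]
        push_cast [f3]; ring
      have hm0 : (0 : ℝ) ≤ (m : ℝ) := Nat.cast_nonneg m
      have hF : 0 ≤ γ₁ * ((((m : ℝ) + 2) - α) * (((m : ℝ) + 3) - α)) +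
          ((2 + α) / 2 - 2 * γ₁) * ((((m : ℝ) + 2) - α) * ((m : ℝ) + 4)) +
          (γ₁ - α / 2) * (((m : ℝ) + 4) * ((m : ℝ) + 3)) := by
        have hc : α ^ 2 + 3 * α + 4 ≤ 14 := by nlinarith
        nlinarith [hA', mul_nonneg hm0 hm0,
          mul_nonneg hm0 (show (0 : ℝ) ≤ 8 - (α ^ 2 + 3 * α + 4) / 2 by linarith)]
      have key : γ₁ * wgt α (m + 2 + 2) + ((2 + α) / 2 - 2 * γ₁) * wgt α (m + 2 + 1) +
          (γ₁ - α / 2) * wgt α (m + 2)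
          = Q * (γ₁ * ((((m : ℝ) + 2) - α) * (((m : ℝ) + 3) - α)) +
              ((2 + α) / 2 - 2 * γ₁) * ((((m : ℝ) + 2) - α) * ((m : ℝ) + 4)) +
              (γ₁ - α / 2) * (((m : ℝ) + 4) * ((m : ℝ) + 3))) /
            (((m : ℝ) + 4) * (((m : ℝ) + 3) * (Nat.factorial (m + 2)))) := by
        rw [show m + 2 + 2 = m + 4 from rfl, show m + 2 + 1 = m + 3 from rfl, e2, e3, e4,
          f3, f4]
        field_simp
      rw [key]
      apply div_nonneg (mul_nonneg hQ hF)
      positivity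
end

section
/- Let 1 < α < 2, h > 0, λ ≥ 0, and suppose (γ₁, γ₂, γ₃) lies in regime S2: γ₁ = (2+α)/4 − γ₂/2, γ₃ = (2−α)/4 − γ₂/2, and ((α−4)(α²+3α+2)+24)/(2(α²+3α+2)) ≤ γ₂ ≤ min{ ((α−2)(α²+3α+4)+16)/(2(α²+3α+4)), ((α−6)(α²+3α+2)+48)/(2(α²+3α+2)) }. Then the tempered-WSGD weights satisfy g_1^{(α)} ≤ 0, g_0^{(α)} + g_2^{(α)} ≥ 0, and g_k^{(α)} ≥ 0 for every k ≥ 3. -/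
lemma wgt_succ (α : ℝ) (k : ℕ) :
    wgt α (k + 1) = wgt α k * ((k : ℝ) - α) / ((k : ℝ) + 1) := by
  unfold wgt
  rw [Finset.prod_range_succ, Nat.factorial_succ]
  have hk : (Nat.factorial k : ℝ) ≠ 0 := Nat.cast_ne_zero.mpr (Nat.factorial_ne_zero k)
  have hk1 : ((k : ℝ) + 1) ≠ 0 := by positivity
  push_cast
  field_simp
  ring

lemma wgt_two (α : ℝ) : wgt α 2 = α * (α - 1) / 2 := by
  simp [wgt, Finset.prod_range_succ, Nat.factorial]
  try ring

lemma wgt_pos {α : ℝ} (hα₁ : 1 < α) (hα₂ : α < 2) : ∀ k : ℕ, 0 < wgt α (k + 2) := by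
  intro k
  induction k with
  | zero => rw [wgt_two]; nlinarith
  | succ n ih =>
      rw [show n + 1 + 2 = (n + 2) + 1 from rfl, wgt_succ]
      have h1 : (0 : ℝ) < ((n + 2 : ℕ) : ℝ) - α := by push_cast; nlinarith [Nat.cast_nonneg (α := ℝ) n]
      have h2 : (0 : ℝ) < ((n + 2 : ℕ) : ℝ) + 1 := by positivity
      exact div_pos (mul_pos ih h1) h2

set_option maxHeartbeats 1000000 in
theorem gwt_sign_regimeS2 (α γ₁ γ₂ γ₃ h lam : ℝ)
    (hα₁ : 1 < α) (hα₂ : α < 2) (hh : 0 < h) (hlam : 0 ≤ lam)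
    (hreg : RegimeS2 α γ₁ γ₂ γ₃) :
    gwt α γ₁ γ₂ γ₃ h lam 1 ≤ 0 ∧
    0 ≤ gwt α γ₁ γ₂ γ₃ h lam 0 + gwt α γ₁ γ₂ γ₃ h lam 2 ∧
    ∀ k : ℕ, 3 ≤ k → 0 ≤ gwt α γ₁ γ₂ γ₃ h lam k := by
  obtain ⟨hγ1, hγ3, hlb, hub⟩ := hreg
  have hub1 := (le_min_iff.mp hub).1
  have hub2 := (le_min_iff.mp hub).2
  have hd1 : (0 : ℝ) < 2 * (α ^ 2 + 3 * α + 4) := by nlinarith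
  have hd2 : (0 : ℝ) < 2 * (α ^ 2 + 3 * α + 2) := by nlinarith
  have hub1' : γ₂ * (2 * (α ^ 2 + 3 * α + 4)) ≤ (α - 2) * (α ^ 2 + 3 * α + 4) + 16 :=
    (le_div_iff₀ hd1).mp hub1
  have hub2' : γ₂ * (2 * (α ^ 2 + 3 * α + 2)) ≤ (α - 6) * (α ^ 2 + 3 * α + 2) + 48 :=
    (le_div_iff₀ hd2).mp hub2
  have hlb' : (α - 4) * (α ^ 2 + 3 * α + 2) + 24 ≤ γ₂ * (2 * (α ^ 2 + 3 * α + 2)) :=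
    (div_le_iff₀ hd2).mp hlb
  have hγ₂α : γ₂ ≤ α / 2 := by nlinarith
  have hγ1nn : 0 ≤ γ₁ := by rw [hγ1]; nlinarith
  have hw0 : wgt α 0 = 1 := by simp [wgt]
  have hw1 : wgt α 1 = -α := by simp [wgt, Nat.factorial]
  have hw2 : wgt α 2 = α * (α - 1) / 2 := wgt_two α
  have hw3 : wgt α 3 = α * (α - 1) * (2 - α) / 6 := by
    rw [show (3 : ℕ) = 2 + 1 from rfl, wgt_succ, hw2]
    push_cast
    ring
  have geq : ∀ n : ℕ, gwt α γ₁ γ₂ γ₃ h lam (n + 2) =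
      (γ₁ * wgt α (n + 2) + γ₂ * wgt α (n + 1) + γ₃ * wgt α n) *
        Real.exp (-(((n : ℝ) + 1) * h * lam)) := fun n => rfl
  refine ⟨?_, ?_, ?_⟩
  · -- g₁ ≤ 0
    show γ₁ * wgt α 1 + γ₂ * wgt α 0 ≤ 0
    rw [hw0, hw1, hγ1]
    nlinarith
  · -- g₀ + g₂ ≥ 0
    rw [show (2 : ℕ) = 0 + 2 from rfl, geq 0]
    show 0 ≤ γ₁ * Real.exp (h * lam) + _
    obtain ⟨B, hBdef⟩ : ∃ B : ℝ, B = γ₁ * wgt α (0 + 2) + γ₂ * wgt α (0 + 1) + γ₃ * wgt α 0 :=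
      ⟨_, rfl⟩
    rw [← hBdef]
    have hE : 1 ≤ Real.exp (h * lam) := Real.one_le_exp (by positivity)
    have hEpos : 0 < Real.exp (h * lam) := Real.exp_pos _
    have hneg : Real.exp (-((((0 : ℕ) : ℝ) + 1) * h * lam)) = (Real.exp (h * lam))⁻¹ := by
      rw [← Real.exp_neg]
      norm_num
    rw [hneg]
    have hB' : 0 ≤ γ₁ + B := by
      rw [hBdef, show (0:ℕ)+2 = 2 from rfl, show (0:ℕ)+1 = 1 from rfl, hw0, hw1, hw2, hγ1, hγ3]
      nlinarith
    have hE2 : (0:ℝ) ≤ Real.exp (h * lam) ^ 2 - 1 := by nlinarith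
    calc (0:ℝ) ≤ (γ₁ * Real.exp (h * lam) ^ 2 + B) / Real.exp (h * lam) := by
          apply div_nonneg _ hEpos.le
          nlinarith [mul_nonneg hγ1nn hE2]
      _ = γ₁ * Real.exp (h * lam) + B * (Real.exp (h * lam))⁻¹ := by
          field_simp
  · -- k ≥ 3
    intro k hk
    obtain ⟨n, rfl⟩ := Nat.exists_eq_add_of_le hk
    cases n with
    | zero =>
      rw [show 3 + 0 = 1 + 2 from rfl, geq 1]
      apply mul_nonneg _ (Real.exp_pos _).le
      rw [show (1:ℕ)+2 = 3 from rfl, show (1:ℕ)+1 = 2 from rfl, hw1, hw2, hw3, hγ1, hγ3]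
      have hX : 0 ≤ γ₂ * (2 * (α ^ 2 + 3 * α + 2)) - ((α - 4) * (α ^ 2 + 3 * α + 2) + 24) := by
        linarith
      nlinarith [mul_nonneg (by linarith : (0:ℝ) ≤ α) hX]
    | succ m =>
      rw [show 3 + (m + 1) = (m + 2) + 2 by omega, geq (m + 2)]
      apply mul_nonneg _ (Real.exp_pos _).le
      have hw : 0 < wgt α (m + 2) := wgt_pos hα₁ hα₂ m
      have hm : (0 : ℝ) ≤ (m : ℝ) := Nat.cast_nonneg m
      have h3 : (0 : ℝ) < (m : ℝ) + 3 := by positivity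
      have h4 : (0 : ℝ) < (m : ℝ) + 4 := by positivity
      have e1 : wgt α (m + 2 + 1) = wgt α (m + 2) * (((m : ℝ) + 2) - α) / ((m : ℝ) + 3) := by
        rw [wgt_succ]
        push_cast
        ring
      have e2 : wgt α (m + 2 + 2) = wgt α (m + 2) * (((m : ℝ) + 2) - α) / ((m : ℝ) + 3) *
          (((m : ℝ) + 3) - α) / ((m : ℝ) + 4) := by
        rw [show m + 2 + 2 = (m + 2 + 1) + 1 from rfl, wgt_succ, e1]
        push_cast
        ring
      rw [e1, e2]
      have hQ : 0 ≤ γ₁ * (((m : ℝ) + 2) - α) * (((m : ℝ) + 3) - α) +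
          γ₂ * (((m : ℝ) + 2) - α) * ((m : ℝ) + 4) + γ₃ * ((m : ℝ) + 3) * ((m : ℝ) + 4) := by
        rw [hγ1, hγ3]
        have hms : (0 : ℝ) ≤ (m : ℝ) + 8 - (α ^ 2 + 3 * α + 4) / 2 := by nlinarith
        nlinarith [mul_nonneg hm hms]
      have expand : γ₁ * (wgt α (m + 2) * (((m : ℝ) + 2) - α) / ((m : ℝ) + 3) *
            (((m : ℝ) + 3) - α) / ((m : ℝ) + 4)) +
          γ₂ * (wgt α (m + 2) * (((m : ℝ) + 2) - α) / ((m : ℝ) + 3)) + γ₃ * wgt α (m + 2) =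
          wgt α (m + 2) * (γ₁ * (((m : ℝ) + 2) - α) * (((m : ℝ) + 3) - α) +
            γ₂ * (((m : ℝ) + 2) - α) * ((m : ℝ) + 4) + γ₃ * ((m : ℝ) + 3) * ((m : ℝ) + 4)) /
            (((m : ℝ) + 3) * ((m : ℝ) + 4)) := by
        field_simp
      rw [expand]
      exact div_nonneg (mul_nonneg hw.le hQ) (by positivity)
end
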